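/- arXiv:1204.1037 — 2 statements merged into one kernel-verified Lean document; each statement's English description precedes it below -/
import Mathlib

section
/- The right-arc matching of an m-diagram is well-defined: for every standard Young tableau T of shape (n,n,n) with rows R₁, R₂, R₃ and every k ∈ R₃, the set { j ∈ R₂ : j < k and j ≠ R(k′) for all k′ ∈ R₃ with k′ < k } is nonempty, so the greedy rule defines an injective function R : R₃ → R₂ with R(k) < k for all k ∈ R₃. -/
/-!
The greedy rule matches `k ∈ R₃` with the largest unused element of `R₂` below `k`, so it
can only fail when every element of `R₂` below `k` is already used by an earlier element
of `R₃`. By induction the used elements all lie below the current point and are as many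
as the earlier elements of `R₃`, so it suffices that every `k ∈ R₃` has more elements of
`R₂` below it than elements of `R₃`. For `k = T 2 c` the row and column conditions give
`T 1 c' ≤ T 1 c < T 2 c` for the `c + 1` columns `c' ≤ c`, while only the `c` entries left
of `k` in its row lie below `k`.
-/

/-- `T` is a standard Young tableau of shape `(n,n,n) ⊢ 3n`: rows and columns strictly
increase and each of the values `1, …, 3n` is used exactly once.  `T r c` is the entry
in row `r`, column `c`. -/
def IsStandardNNN (n : ℕ) (T : Fin 3 → Fin n → ℕ) : Prop :=
  (∀ r : Fin 3, ∀ c c' : Fin n, c < c' → T r c < T r c') ∧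
  (∀ r r' : Fin 3, r < r' → ∀ c : Fin n, T r c < T r' c) ∧
  (∀ (r : Fin 3) (c : Fin n), T r c ∈ Finset.Icc 1 (3 * n)) ∧
  (∀ v, 1 ≤ v → v ≤ 3 * n → ∃! p : Fin 3 × Fin n, T p.1 p.2 = v)

/-- The set of entries of row `r` of `T` (`r = 0, 1, 2` giving `R₁, R₂, R₃`). -/
def rowSet (n : ℕ) (T : Fin 3 → Fin n → ℕ) (r : Fin 3) : Finset ℕ :=
  Finset.univ.image (T r)

/-- The set of elements of `A` already used as matches of the elements of `B`
smaller than `n`, processing the elements of `B` in increasing order greedily. -/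
def usedMatches (A B : Finset ℕ) : ℕ → Finset ℕ
  | 0 => ∅
  | n + 1 =>
    let U := usedMatches A B n
    if n ∈ B then U ∪ {((A \ U).filter (· < n)).sup id} else U

/-- The greedy matching rule of the m-diagram construction: processing the elements
`j` of `B` in increasing order, `greedyMatch A B j` is the largest element of `A`
smaller than `j` not already used as the match of an earlier element of `B`, i.e.
`greedyMatch A B j = max { a ∈ A : a < j and a ≠ greedyMatch A B j' for all j' ∈ B
with j' < j }`.  Applied with `A = R₁`, `B = R₂` it produces the left arcs
`(greedyMatch R₁ R₂ j, j)`; applied with `A = R₂`, `B = R₃` it produces the right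
arcs. -/
def greedyMatch (A B : Finset ℕ) (j : ℕ) : ℕ :=
  ((A \ usedMatches A B j).filter (· < j)).sup id

section GreedyMatch

variable (A B : Finset ℕ)

def BallotCondition : Prop :=
  ∀ m ∈ B, (B.filter (· < m)).card < (A.filter (· < m)).card

def availableMatches (k : ℕ) : Finset ℕ :=
  (A \ usedMatches A B k).filter (· < k)

lemma usedMatches_succ (m : ℕ) :
    usedMatches A B (m + 1) =
      if m ∈ B then insert (greedyMatch A B m) (usedMatches A B m) else usedMatches A B m := by
  rw [usedMatches, Finset.union_comm, ← Finset.insert_eq]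
  rfl

lemma filter_lt_succ (m : ℕ) :
    B.filter (· < m + 1) = if m ∈ B then insert m (B.filter (· < m)) else B.filter (· < m) := by
  ext j
  split_ifs <;> simp only [Finset.mem_insert, Finset.mem_filter] <;> grind

lemma usedMatches_eq_image (m : ℕ) :
    usedMatches A B m = (B.filter (· < m)).image (greedyMatch A B) := by
  induction m with
  | zero => simp [usedMatches]
  | succ m ih =>
    rw [usedMatches_succ, filter_lt_succ]
    split_ifs <;> simp [ih, Finset.image_insert]

lemma filter_forall_greedyMatch_ne_eq (k : ℕ) :
    A.filter (fun j => j < k ∧ ∀ k' ∈ B, k' < k → greedyMatch A B k' ≠ j) =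
      availableMatches A B k := by
  ext j
  simp only [availableMatches, usedMatches_eq_image, Finset.mem_filter, Finset.mem_sdiff,
    Finset.mem_image]
  grind

variable {A B}

lemma greedyMatch_mem_availableMatches_of_nonempty {k : ℕ}
    (h : (availableMatches A B k).Nonempty) :
    greedyMatch A B k ∈ availableMatches A B k := by
  obtain ⟨g, hg, hsup⟩ := Finset.exists_mem_eq_sup _ h id
  rwa [greedyMatch, ← availableMatches, hsup]

lemma availableMatches_nonempty_of_card_lt {k : ℕ} (hsub : usedMatches A B k ⊆ A.filter (· < k))
    (hcard : (usedMatches A B k).card < (A.filter (· < k)).card) :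
    (availableMatches A B k).Nonempty := by
  have heq : availableMatches A B k = A.filter (· < k) \ usedMatches A B k := by
    ext j
    simp only [availableMatches, Finset.mem_filter, Finset.mem_sdiff]
    tauto
  rw [heq, ← Finset.card_pos, Finset.card_sdiff_of_subset hsub]
  omega

namespace BallotCondition

variable (hAB : BallotCondition A B)
include hAB

lemma usedMatches_subset_and_card (m : ℕ) :
    usedMatches A B m ⊆ A.filter (· < m) ∧
      (usedMatches A B m).card = (B.filter (· < m)).card := by
  induction m with
  | zero => simp [usedMatches]
  | succ m ih =>
    obtain ⟨hsub, hcard⟩ := ih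
    have hmono : A.filter (· < m) ⊆ A.filter (· < m + 1) :=
      Finset.monotone_filter_right _ fun _ _ => Nat.lt_succ_of_lt
    rw [usedMatches_succ, filter_lt_succ B]
    split_ifs with hm
    · have hg := greedyMatch_mem_availableMatches_of_nonempty
        (availableMatches_nonempty_of_card_lt hsub (hcard ▸ hAB m hm))
      simp only [availableMatches, Finset.mem_filter, Finset.mem_sdiff] at hg
      refine ⟨Finset.insert_subset ?_ (hsub.trans hmono), ?_⟩
      · exact Finset.mem_filter.mpr ⟨hg.1.1, Nat.lt_succ_of_lt hg.2⟩
      · rw [Finset.card_insert_of_notMem hg.1.2, Finset.card_insert_of_notMem (by simp), hcard]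
    · exact ⟨hsub.trans hmono, hcard⟩

lemma availableMatches_nonempty {k : ℕ} (hk : k ∈ B) : (availableMatches A B k).Nonempty :=
  let ⟨hsub, hcard⟩ := hAB.usedMatches_subset_and_card k
  availableMatches_nonempty_of_card_lt hsub (hcard ▸ hAB k hk)

lemma greedyMatch_mem_availableMatches {k : ℕ} (hk : k ∈ B) :
    greedyMatch A B k ∈ availableMatches A B k :=
  greedyMatch_mem_availableMatches_of_nonempty (hAB.availableMatches_nonempty hk)

lemma greedyMatch_mem {k : ℕ} (hk : k ∈ B) : greedyMatch A B k ∈ A :=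
  (Finset.mem_sdiff.mp (Finset.mem_filter.mp (hAB.greedyMatch_mem_availableMatches hk)).1).1

lemma greedyMatch_lt {k : ℕ} (hk : k ∈ B) : greedyMatch A B k < k :=
  (Finset.mem_filter.mp (hAB.greedyMatch_mem_availableMatches hk)).2

lemma greedyMatch_ne_of_lt {a b : ℕ} (ha : a ∈ B) (hb : b ∈ B) (hab : a < b) :
    greedyMatch A B a ≠ greedyMatch A B b := by
  intro heq
  have hused : greedyMatch A B b ∈ usedMatches A B b := by
    rw [← heq, usedMatches_eq_image]
    exact Finset.mem_image_of_mem _ (Finset.mem_filter.mpr ⟨ha, hab⟩)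
  exact (Finset.mem_sdiff.mp (Finset.mem_filter.mp
    (hAB.greedyMatch_mem_availableMatches hb)).1).2 hused

lemma injOn_greedyMatch : Set.InjOn (greedyMatch A B) B := by
  intro a ha b hb heq
  by_contra hne
  rcases Ne.lt_or_gt hne with hab | hba
  · exact hAB.greedyMatch_ne_of_lt ha hb hab heq
  · exact hAB.greedyMatch_ne_of_lt hb ha hba heq.symm

end BallotCondition

end GreedyMatch

lemma ballotCondition_image_of_strictMono {n : ℕ} {f g : Fin n → ℕ} (hf : StrictMono f)
    (hg : StrictMono g) (hfg : ∀ c, f c < g c) :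
    BallotCondition (Finset.univ.image f) (Finset.univ.image g) := by
  intro m hm
  obtain ⟨c, -, rfl⟩ := Finset.mem_image.mp hm
  have hB : (Finset.univ.image g).filter (· < g c) = (Finset.Iio c).image g := by
    ext j
    simp only [Finset.mem_filter, Finset.mem_image, Finset.mem_univ, true_and, Finset.mem_Iio]
    constructor
    · rintro ⟨⟨c', rfl⟩, h⟩
      exact ⟨c', hg.lt_iff_lt.mp h, rfl⟩
    · rintro ⟨c', h, rfl⟩
      exact ⟨⟨c', rfl⟩, hg h⟩
  have hA : (Finset.Iic c).image f ⊆ (Finset.univ.image f).filter (· < g c) := by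
    refine Finset.image_subset_iff.mpr fun c' hc' => Finset.mem_filter.mpr ⟨?_, ?_⟩
    · exact Finset.mem_image_of_mem _ (Finset.mem_univ _)
    · exact (hf.monotone (Finset.mem_Iic.mp hc')).trans_lt (hfg c)
  calc ((Finset.univ.image g).filter (· < g c)).card
      ≤ (Finset.Iio c).card := hB ▸ Finset.card_image_le
    _ = (c : ℕ) := Fin.card_Iio c
    _ < (Finset.Iic c).card := by rw [Fin.card_Iic]; omega
    _ = ((Finset.Iic c).image f).card := (Finset.card_image_of_injective _ hf.injective).symm
    _ ≤ _ := Finset.card_le_card hA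

/-- The right-arc matching is well-defined: for each `k ∈ R₃` the set of available left
endpoints is nonempty, and the greedy rule `R = greedyMatch R₂ R₃` is injective on
`R₃`, takes values in `R₂`, and satisfies `R k < k`. -/
theorem right_arc_matching_well_defined (n : ℕ) (T : Fin 3 → Fin n → ℕ)
    (hT : IsStandardNNN n T) :
    (∀ k ∈ rowSet n T 2,
      ((rowSet n T 1).filter fun j => j < k ∧
        ∀ k' ∈ rowSet n T 2, k' < k → greedyMatch (rowSet n T 1) (rowSet n T 2) k' ≠ j).Nonempty) ∧
    Set.InjOn (greedyMatch (rowSet n T 1) (rowSet n T 2)) ↑(rowSet n T 2) ∧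
    (∀ k ∈ rowSet n T 2,
      greedyMatch (rowSet n T 1) (rowSet n T 2) k ∈ rowSet n T 1 ∧
      greedyMatch (rowSet n T 1) (rowSet n T 2) k < k) := by
  obtain ⟨hrow, hcol, -, -⟩ := hT
  have hAB : BallotCondition (rowSet n T 1) (rowSet n T 2) :=
    ballotCondition_image_of_strictMono (fun _ _ => hrow 1 _ _) (fun _ _ => hrow 2 _ _)
      (hcol 1 2 (by decide))
  refine ⟨fun k hk => ?_, hAB.injOn_greedyMatch,
    fun k hk => ⟨hAB.greedyMatch_mem hk, hAB.greedyMatch_lt hk⟩⟩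
  rw [filter_forall_greedyMatch_ne_eq]
  exact hAB.availableMatches_nonempty hk
end

section
/- Let T be a standard Young tableau of shape (n,n,n) with rows R₁, R₂, R₃, left-arc matching L and right-arc matching R. If (i, i+1) ∈ τ(T) with i in the top row and i+1 in the bottom row (i.e., i ∈ R₁ and i+1 ∈ R₃), then the unique j ∈ R₂ with L(j) = i satisfies j > i+1, and R(i+1) < i; consequently the left arc (i, j) and the right arc (R(i+1), i+1) cross, since R(i+1) < i < i+1 < j. -/
/-!
The left matching `L` is defined on all of `R₂` and is injective: a column argument shows
that below `j = T 1 c` there are at least `c + 1` entries of `R₁` but only `c` entries of `R₂`,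
so a free candidate always exists, and a matched element of `R₁` is never reused. As
`#R₁ = #R₂`, `L` is a bijection `R₂ → R₁`, so `i` has a unique preimage `j`, and
`i = L j < j ≠ i + 1` since `i + 1 ∈ R₃`. The same count for the rows `R₂, R₃` gives
`R (i+1) ∈ R₂` with `R (i+1) < i + 1`, and `R (i+1) ≠ i` because `i ∈ R₁`.
-/

open Finset

def Dominates (A B : Finset ℕ) : Prop :=
  ∀ j ∈ B, #(B.filter (· < j)) < #(A.filter (· < j))

section GreedyMatch

variable {A B : Finset ℕ}

theorem monotone_usedMatches (A B : Finset ℕ) : Monotone (usedMatches A B) := by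
  refine monotone_nat_of_le_succ fun k => ?_
  simp only [usedMatches]
  split_ifs
  · exact subset_union_left
  · exact subset_rfl

theorem card_usedMatches_le (A B : Finset ℕ) (m : ℕ) :
    #(usedMatches A B m) ≤ #(B.filter (· < m)) := by
  induction m with
  | zero => simp [usedMatches]
  | succ k ih =>
    simp only [usedMatches]
    split_ifs with hk
    · have hins : B.filter (· < k + 1) = insert k (B.filter (· < k)) := by
        ext x
        simp only [mem_filter, mem_insert]
        grind
      rw [hins, card_insert_of_notMem (by simp)]
      exact (card_union_le _ _).trans (by simpa using ih)
    · exact ih.trans (card_le_card (monotone_filter_right B fun _ _ hx => by omega))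

theorem greedyMatch_mem_usedMatches {j m : ℕ} (hj : j ∈ B) (hjm : j < m) :
    greedyMatch A B j ∈ usedMatches A B m :=
  monotone_usedMatches A B hjm (by simp [usedMatches, hj, greedyMatch])

theorem greedyMatch_mem_filter_sdiff {j : ℕ}
    (h : #(B.filter (· < j)) < #(A.filter (· < j))) :
    greedyMatch A B j ∈ (A \ usedMatches A B j).filter (· < j) := by
  obtain ⟨a, ha, haU⟩ := exists_mem_notMem_of_card_lt_card
    ((card_usedMatches_le A B j).trans_lt h)
  rw [mem_filter] at ha
  have hne : ((A \ usedMatches A B j).filter (· < j)).Nonempty :=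
    ⟨a, mem_filter.mpr ⟨mem_sdiff.mpr ⟨ha.1, haU⟩, ha.2⟩⟩
  obtain ⟨x, hx, hsup⟩ := exists_mem_eq_sup _ hne id
  rwa [greedyMatch, hsup]

theorem greedyMatch_mem_and_lt (hAB : Dominates A B) {j : ℕ} (hj : j ∈ B) :
    greedyMatch A B j ∈ A ∧ greedyMatch A B j < j := by
  have h := mem_filter.mp (greedyMatch_mem_filter_sdiff (hAB j hj))
  exact ⟨(mem_sdiff.mp h.1).1, h.2⟩

theorem greedyMatch_injOn (hAB : Dominates A B) : Set.InjOn (greedyMatch A B) B := by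
  intro j hj j' hj' heq
  by_contra hne
  wlog hlt : j < j' generalizing j j'
  · exact this hj' hj heq.symm (Ne.symm hne) (by omega)
  have hfree := mem_sdiff.mp (mem_filter.mp (greedyMatch_mem_filter_sdiff (hAB j' hj'))).1
  exact hfree.2 (heq ▸ greedyMatch_mem_usedMatches hj hlt)

theorem image_greedyMatch (hAB : Dominates A B) (hcard : #A ≤ #B) :
    B.image (greedyMatch A B) = A :=
  eq_of_subset_of_card_le
    (fun _ hx => by
      obtain ⟨j, hj, rfl⟩ := mem_image.mp hx
      exact (greedyMatch_mem_and_lt hAB hj).1)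
    (by rwa [card_image_of_injOn (greedyMatch_injOn hAB)])

end GreedyMatch

section Tableau

variable {n : ℕ} {T : Fin 3 → Fin n → ℕ}

theorem card_rowSet (hT : IsStandardNNN n T) (r : Fin 3) : #(rowSet n T r) = n := by
  rw [rowSet, card_image_of_injective _ (StrictMono.injective (hT.1 r)), card_univ,
    Fintype.card_fin]

theorem disjoint_rowSet (hT : IsStandardNNN n T) {r r' : Fin 3} (h : r ≠ r') :
    Disjoint (rowSet n T r) (rowSet n T r') := by
  refine disjoint_left.mpr fun x hx hx' => h ?_
  obtain ⟨c, -, rfl⟩ := mem_image.mp hx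
  obtain ⟨c', -, hc'⟩ := mem_image.mp hx'
  obtain ⟨hlo, hhi⟩ := mem_Icc.mp (hT.2.2.1 r c)
  exact congrArg Prod.fst ((hT.2.2.2 _ hlo hhi).unique (y₁ := (r, c)) (y₂ := (r', c')) rfl hc')

theorem card_filter_rowSet_lt_self (hT : IsStandardNNN n T) (r : Fin 3) (c : Fin n) :
    #((rowSet n T r).filter (· < T r c)) = c := by
  rw [rowSet, filter_image, card_image_of_injective _ (StrictMono.injective (hT.1 r))]
  simp only [(StrictMono.lt_iff_lt (hT.1 r))]
  rw [filter_gt_eq_Iio, Fin.card_Iio]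

theorem dominates_rowSet (hT : IsStandardNNN n T) {r r' : Fin 3} (h : r < r') :
    Dominates (rowSet n T r) (rowSet n T r') := by
  rintro _ hj
  obtain ⟨c, -, rfl⟩ := mem_image.mp hj
  rw [card_filter_rowSet_lt_self hT r' c, ← card_filter_rowSet_lt_self hT r c]
  refine card_lt_card (ssubset_iff_of_subset ?_ |>.mpr ⟨T r c, ?_, ?_⟩)
  · exact monotone_filter_right _ fun _ _ hx => hx.trans (hT.2.1 r r' h c)
  · exact mem_filter.mpr ⟨mem_image_of_mem _ (mem_univ c), hT.2.1 r r' h c⟩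
  · simp

end Tableau

/-- If `i ∈ R₁` and `i + 1 ∈ R₃`, then there is a unique `j ∈ R₂` with `L j = i`, every
such `j` satisfies `i + 1 < j`, and `R (i+1) < i`; hence the left arc `(i, j)` and the
right arc `(R (i+1), i+1)` cross: `R (i+1) < i < i + 1 < j`. -/
theorem crossing_arc_of_tau_pair (n : ℕ) (T : Fin 3 → Fin n → ℕ)
    (hT : IsStandardNNN n T) (i : ℕ)
    (hi : i ∈ rowSet n T 0) (hi1 : i + 1 ∈ rowSet n T 2) :
    (∃! j, j ∈ rowSet n T 1 ∧ greedyMatch (rowSet n T 0) (rowSet n T 1) j = i) ∧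
    (∀ j ∈ rowSet n T 1, greedyMatch (rowSet n T 0) (rowSet n T 1) j = i → i + 1 < j) ∧
    greedyMatch (rowSet n T 1) (rowSet n T 2) (i + 1) < i ∧
    (∀ j ∈ rowSet n T 1, greedyMatch (rowSet n T 0) (rowSet n T 1) j = i →
      greedyMatch (rowSet n T 1) (rowSet n T 2) (i + 1) < i ∧ i < i + 1 ∧ i + 1 < j) := by
  have hL := dominates_rowSet hT (show (0 : Fin 3) < 1 by decide)
  have hR := dominates_rowSet hT (show (1 : Fin 3) < 2 by decide)
  obtain ⟨j₀, hj₀, hj₀i⟩ :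
      ∃ j ∈ rowSet n T 1, greedyMatch (rowSet n T 0) (rowSet n T 1) j = i :=
    mem_image.mp <| (image_greedyMatch hL (by rw [card_rowSet hT, card_rowSet hT])).symm ▸ hi
  have hj_gt :
      ∀ j ∈ rowSet n T 1, greedyMatch (rowSet n T 0) (rowSet n T 1) j = i → i + 1 < j := by
    rintro j hj rfl
    have hlt := (greedyMatch_mem_and_lt hL hj).2
    have hne : j ≠ greedyMatch (rowSet n T 0) (rowSet n T 1) j + 1 := fun h =>
      disjoint_left.mp (disjoint_rowSet hT (show (1 : Fin 3) ≠ 2 by decide)) hj (h ▸ hi1)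
    omega
  have hR_lt : greedyMatch (rowSet n T 1) (rowSet n T 2) (i + 1) < i := by
    obtain ⟨hmem, hlt⟩ := greedyMatch_mem_and_lt hR hi1
    have hne : greedyMatch (rowSet n T 1) (rowSet n T 2) (i + 1) ≠ i := fun h =>
      disjoint_left.mp (disjoint_rowSet hT (show (0 : Fin 3) ≠ 1 by decide)) hi (h ▸ hmem)
    omega
  refine ⟨⟨j₀, ⟨hj₀, hj₀i⟩, fun j ⟨hj, hji⟩ =>
      greedyMatch_injOn hL hj hj₀ (hji.trans hj₀i.symm)⟩,
    hj_gt, hR_lt, fun j hj hji => ⟨hR_lt, i.lt_succ_self, hj_gt j hj hji⟩⟩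
end
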